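/- arXiv:2511.19651 — 3 statements merged into one kernel-verified Lean document; each statement's English description precedes it below -/
import Mathlib

section
/- Let ψ : [0,∞) → ℝ be differentiable with ψ'(t) ≥ -α(ψ(t)) for all t, where α : ℝ → ℝ is a locally Lipschitz function with α(0) = 0 and α strictly increasing (an extended class 𝒦 function). If ψ(0) ≥ 0 then ψ(t) ≥ 0 for all t ≥ 0. -/
/-- scalar comparison lemma with an extended class 𝒦 function `α`
(strictly increasing, locally Lipschitz, `α 0 = 0`). -/
theorem stmt_1 (ψ : ℝ → ℝ) (hψ : Differentiable ℝ ψ)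
    (α : ℝ → ℝ) (hαlip : LocallyLipschitz α) (hα0 : α 0 = 0) (hαmono : StrictMono α)
    (hineq : ∀ t : ℝ, 0 ≤ t → deriv ψ t ≥ -α (ψ t))
    (h0 : 0 ≤ ψ 0) :
    ∀ t : ℝ, 0 ≤ t → 0 ≤ ψ t := by
  intro t ht
  by_contra h
  push_neg at h
  set S := {u : ℝ | u ∈ Set.Icc 0 t ∧ 0 ≤ ψ u} with hSdef
  have hS0 : (0:ℝ) ∈ S := ⟨⟨le_refl 0, ht⟩, h0⟩
  have hSc : IsClosed S := by
    have h1 : IsClosed (Set.Icc (0:ℝ) t) := isClosed_Icc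
    have h2 : IsClosed {u : ℝ | 0 ≤ ψ u} :=
      isClosed_le continuous_const hψ.continuous
    exact h1.inter h2
  have hSb : BddAbove S := ⟨t, fun u hu => hu.1.2⟩
  set s := sSup S with hs
  have hsS : s ∈ S := IsClosed.csSup_mem hSc ⟨0, hS0⟩ hSb
  have hs0 : 0 ≤ s := hsS.1.1
  have hst : s ≤ t := hsS.1.2
  have hψs : 0 ≤ ψ s := hsS.2
  have hneg : ∀ u ∈ Set.Ioc s t, ψ u < 0 := by
    rintro u ⟨hu1, hu2⟩
    by_contra hc
    push_neg at hc
    have huS : u ∈ S := ⟨⟨le_trans hs0 hu1.le, hu2⟩, hc⟩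
    exact absurd (le_csSup hSb huS) (not_le.mpr hu1)
  have hst' : s < t := by
    rcases lt_or_eq_of_le hst with h' | h'
    · exact h'
    · rw [h'] at hψs; linarith
  have hmono : StrictMonoOn ψ (Set.Icc s t) := by
    apply strictMonoOn_of_deriv_pos (convex_Icc s t) hψ.continuous.continuousOn
    intro u hu
    rw [interior_Icc] at hu
    have hψu := hneg u ⟨hu.1, hu.2.le⟩
    have hαu : α (ψ u) < 0 := by
      have := hαmono hψu
      rwa [hα0] at this
    have := hineq u (le_trans hs0 hu.1.le)
    linarith
  have := hmono (Set.left_mem_Icc.mpr hst'.le) (Set.right_mem_Icc.mpr hst'.le) hst'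
  linarith
end

section
/- For the double integrator with obstacle barrier h(r,v) = ‖r - r₀‖² - D², suppose along a solution the second-order HOCBF inequality 2‖v‖² + 2⟨r - r₀, u⟩ + (γ₁+γ₂)·2⟨r - r₀, v⟩ + γ₁γ₂(‖r - r₀‖² - D²) ≥ 0 holds for all t with γ₁, γ₂ > 0, and initially ‖r(0) - r₀‖ ≥ D and 2⟨r(0) - r₀, v(0)⟩ + γ₁(‖r(0) - r₀‖² - D²) ≥ 0. Then ‖r(t) - r₀‖ ≥ D for all t ≥ 0. -/
/-!
Write `h = ‖r - r₀‖² - D²`, `ψ₁ = ḣ + γ₁ h` and `ψ₂ = ψ̇₁ + γ₂ ψ₁`; the hypothesis says `ψ₂ ≥ 0`.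
A scalar inequality `ḟ + γ f ≥ 0` makes `exp (γ t) f t` nondecreasing, so `f (0) ≥ 0` propagates
to `f t ≥ 0` for `t ≥ 0`. Applied first to `ψ₁` (with `γ₂`) and then to `h` (with `γ₁`), this
gives `h ≥ 0` along the trajectory.
-/

open scoped RealInnerProductSpace

open Real Set

theorem nonneg_of_hasDerivAt_of_deriv_add_mul_nonneg {f f' : ℝ → ℝ} {γ : ℝ}
    (hf : ∀ t, HasDerivAt f (f' t) t) (hf' : ∀ t, 0 ≤ t → 0 ≤ f' t + γ * f t)
    (h0 : 0 ≤ f 0) {t : ℝ} (ht : 0 ≤ t) : 0 ≤ f t := by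
  set g : ℝ → ℝ := fun s => exp (γ * s) * f s
  have hg : ∀ s, HasDerivAt g (exp (γ * s) * (f' s + γ * f s)) s := fun s => by
    have hexp : HasDerivAt (fun s => exp (γ * s)) (exp (γ * s) * γ) s := by
      simpa using ((hasDerivAt_id s).const_mul γ).exp
    exact (hexp.mul (hf s)).congr_deriv (by ring)
  have hmono : MonotoneOn g (Ici 0) := by
    refine monotoneOn_of_hasDerivWithinAt_nonneg (convex_Ici 0)
      (fun s _ => (hg s).continuousAt.continuousWithinAt)
      (fun s _ => (hg s).hasDerivWithinAt) fun s hs => ?_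
    rw [interior_Ici] at hs
    exact mul_nonneg (exp_pos _).le (hf' s (le_of_lt hs))
  have hgt : 0 ≤ exp (γ * t) * f t :=
    calc (0 : ℝ) ≤ g 0 := by simpa [g] using h0
      _ ≤ g t := hmono self_mem_Ici ht ht
  exact (mul_nonneg_iff_of_pos_left (exp_pos _)).1 hgt

theorem nonneg_of_second_order_barrier {h h' h'' : ℝ → ℝ} {γ₁ γ₂ : ℝ}
    (hh : ∀ t, HasDerivAt h (h' t) t) (hh' : ∀ t, HasDerivAt h' (h'' t) t)
    (hbarrier : ∀ t, 0 ≤ t → 0 ≤ h'' t + (γ₁ + γ₂) * h' t + γ₁ * γ₂ * h t)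
    (h0 : 0 ≤ h 0) (hψ0 : 0 ≤ h' 0 + γ₁ * h 0) {t : ℝ} (ht : 0 ≤ t) : 0 ≤ h t := by
  have hψ : ∀ s, 0 ≤ s → 0 ≤ h' s + γ₁ * h s := fun _ hs =>
    nonneg_of_hasDerivAt_of_deriv_add_mul_nonneg (f := fun s => h' s + γ₁ * h s) (γ := γ₂)
      (fun s => (hh' s).add ((hh s).const_mul γ₁))
      (fun s hs => by linarith [hbarrier s hs]) hψ0 hs
  exact nonneg_of_hasDerivAt_of_deriv_add_mul_nonneg hh hψ h0 ht

theorem hasDerivAt_two_inner_sub {E : Type*} [NormedAddCommGroup E] [InnerProductSpace ℝ E]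
    {r v u : ℝ → E} {t : ℝ} (r₀ : E) (hr : HasDerivAt r (v t) t) (hv : HasDerivAt v (u t) t) :
    HasDerivAt (fun s => 2 * ⟪r s - r₀, v s⟫) (2 * ‖v t‖ ^ 2 + 2 * ⟪r t - r₀, u t⟫) t := by
  refine (((hr.sub_const r₀).inner ℝ hv).const_mul 2).congr_deriv ?_
  rw [real_inner_self_eq_norm_sq]
  ring

theorem stmt_5_general (r v u : ℝ → EuclideanSpace ℝ (Fin 3))
    (r₀ : EuclideanSpace ℝ (Fin 3)) (D γ₁ γ₂ : ℝ)
    (hD : 0 < D)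
    (hr : ∀ t, HasDerivAt r (v t) t) (hv : ∀ t, HasDerivAt v (u t) t)
    (hineq : ∀ t : ℝ, 0 ≤ t →
      2 * ‖v t‖ ^ 2 + 2 * ⟪r t - r₀, u t⟫
        + (γ₁ + γ₂) * (2 * ⟪r t - r₀, v t⟫)
        + γ₁ * γ₂ * (‖r t - r₀‖ ^ 2 - D ^ 2) ≥ 0)
    (h0 : D ≤ ‖r 0 - r₀‖)
    (hψ0 : 2 * ⟪r 0 - r₀, v 0⟫ + γ₁ * (‖r 0 - r₀‖ ^ 2 - D ^ 2) ≥ 0) :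
    ∀ t : ℝ, 0 ≤ t → D ≤ ‖r t - r₀‖ := by
  intro t ht
  have hsq : 0 ≤ ‖r t - r₀‖ ^ 2 - D ^ 2 :=
    nonneg_of_second_order_barrier (h := fun s => ‖r s - r₀‖ ^ 2 - D ^ 2)
      (fun s => ((hr s).sub_const r₀).norm_sq.sub_const _)
      (fun s => hasDerivAt_two_inner_sub r₀ (hr s) (hv s)) hineq
      (sub_nonneg.2 (pow_le_pow_left₀ hD.le h0 2)) hψ0 ht
  exact (sq_le_sq₀ hD.le (norm_nonneg _)).1 (sub_nonneg.1 hsq)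

/-- order-2 HOCBF safety for the double integrator with a
spherical forbidden region. -/
theorem stmt_5 (r v u : ℝ → EuclideanSpace ℝ (Fin 3))
    (r₀ : EuclideanSpace ℝ (Fin 3)) (D γ₁ γ₂ : ℝ)
    (hD : 0 < D) (hγ₁ : 0 < γ₁) (hγ₂ : 0 < γ₂)
    (hu : Continuous u)
    (hr : ∀ t, HasDerivAt r (v t) t) (hv : ∀ t, HasDerivAt v (u t) t)
    (hineq : ∀ t : ℝ, 0 ≤ t →
      2 * ‖v t‖ ^ 2 + 2 * ⟪r t - r₀, u t⟫
        + (γ₁ + γ₂) * (2 * ⟪r t - r₀, v t⟫)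
        + γ₁ * γ₂ * (‖r t - r₀‖ ^ 2 - D ^ 2) ≥ 0)
    (h0 : D ≤ ‖r 0 - r₀‖)
    (hψ0 : 2 * ⟪r 0 - r₀, v 0⟫ + γ₁ * (‖r 0 - r₀‖ ^ 2 - D ^ 2) ≥ 0) :
    ∀ t : ℝ, 0 ≤ t → D ≤ ‖r t - r₀‖ :=
  stmt_5_general r v u r₀ D γ₁ γ₂ hD hr hv hineq h0 hψ0
end

section
/- Nested safe sets under linear class 𝒦 functions: with ψ₀ = h and ψ_i = ψ_{i-1}' + γ_i ψ_{i-1} (γ_i > 0) along a solution, if ψ_i(0) ≥ 0 for all i = 0, …, r-1 and ψ_r(t) ≥ 0 for all t ≥ 0, then ψ_i(t) ≥ 0 for every i = 0, …, r-1 and all t ≥ 0. -/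
/-!
If `f' = g - c f` then `(e^{c t} f)' = e^{c t} g`, so `e^{c t} f` is nondecreasing wherever
`g ≥ 0`: a nonnegative initial value then stays nonnegative. Applying this to
`ψ_i' = ψ_{i+1} - γ_{i+1} ψ_i`, starting from `ψ_r ≥ 0` and descending in `i`, propagates
nonnegativity down the whole chain.
-/

open Real Set

theorem hasDerivAt_exp_mul_of_hasDerivAt_sub_mul {f : ℝ → ℝ} {g : ℝ} {c t : ℝ}
    (hf : HasDerivAt f (g - c * f t) t) :
    HasDerivAt (fun s => exp (c * s) * f s) (exp (c * t) * g) t := by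
  have hexp : HasDerivAt (fun s => exp (c * s)) (exp (c * t) * c) t :=
    ((hasDerivAt_id t).const_mul c).exp.congr_deriv (by simp)
  exact (hexp.mul hf).congr_deriv (by ring)

theorem nonneg_of_hasDerivAt_sub_mul {f g : ℝ → ℝ} {c a : ℝ}
    (hf : ∀ t, HasDerivAt f (g t - c * f t) t) (hg : ∀ t, a ≤ t → 0 ≤ g t) (ha : 0 ≤ f a) :
    ∀ t, a ≤ t → 0 ≤ f t := by
  have hF (t : ℝ) := hasDerivAt_exp_mul_of_hasDerivAt_sub_mul (hf t)
  have hmono : MonotoneOn (fun s => exp (c * s) * f s) (Ici a) :=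
    monotoneOn_of_hasDerivWithinAt_nonneg (convex_Ici a)
      (fun t _ => (hF t).continuousAt.continuousWithinAt)
      (fun t _ => (hF t).hasDerivWithinAt)
      (fun t ht => mul_nonneg (exp_pos _).le (hg t (by simpa using interior_subset ht)))
  intro t ht
  have hle : exp (c * a) * f a ≤ exp (c * t) * f t := hmono self_mem_Ici ht ht
  exact nonneg_of_mul_nonneg_right ((mul_nonneg (exp_pos _).le ha).trans hle) (exp_pos _)

theorem stmt_9_general (r : ℕ)
    (ψ : ℕ → ℝ → ℝ) (γ : ℕ → ℝ)
    (hchain : ∀ i < r, ∀ t : ℝ, HasDerivAt (ψ i) (ψ (i + 1) t - γ (i + 1) * ψ i t) t)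
    (hinit : ∀ i < r, 0 ≤ ψ i 0)
    (hlast : ∀ t : ℝ, 0 ≤ t → 0 ≤ ψ r t) :
    ∀ i < r, ∀ t : ℝ, 0 ≤ t → 0 ≤ ψ i t := by
  suffices key : ∀ i ≤ r, ∀ t : ℝ, 0 ≤ t → 0 ≤ ψ i t from fun i hi => key i hi.le
  intro i hi
  induction hi using Nat.decreasingInduction with
  | self => exact hlast
  | of_succ k hk hnext =>
    exact nonneg_of_hasDerivAt_sub_mul (hchain k hk) hnext (hinit k hk)

/-- nested safe sets for the order-`r` HOCBF chain with linear class 𝒦 functions: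
`ψ 0 = h`, `ψ (i+1) = (ψ i)' + γ (i+1) * ψ i` (encoded via the derivative hypothesis). -/
theorem stmt_9 (r : ℕ) (hr : 0 < r) (h : ℝ → ℝ)
    (ψ : ℕ → ℝ → ℝ) (γ : ℕ → ℝ) (hγ : ∀ i, 0 < γ i)
    (hψ0 : ψ 0 = h)
    (hchain : ∀ i < r, ∀ t : ℝ, HasDerivAt (ψ i) (ψ (i + 1) t - γ (i + 1) * ψ i t) t)
    (hinit : ∀ i < r, 0 ≤ ψ i 0)
    (hlast : ∀ t : ℝ, 0 ≤ t → 0 ≤ ψ r t) :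
    ∀ i < r, ∀ t : ℝ, 0 ≤ t → 0 ≤ ψ i t :=
  stmt_9_general r ψ γ hchain hinit hlast
end
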